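/- arXiv:2212.10106 — 6 statements merged into one kernel-verified Lean document; each statement's English description precedes it below -/
import Mathlib

section
/- Let ∇(x,y) = ∏_{i=1}^{a} ∏_{j=1}^{b} (x_i - y_j) in k[x_1,...,x_a,y_1,...,y_b]. For all n ≥ 0, the operator L_n · Q = -∑_{i=1}^{a} x_i^{n+1} ∂Q/∂x_i - ∑_{j=1}^{b} y_j^{n+1} ∂Q/∂y_j satisfies L_n · ∇ = -(∑_{k+ℓ=n} p_k(x) p_ℓ(y)) ∇, where p_k(x) = ∑_{i=1}^a x_i^k and p_ℓ(y) = ∑_{j=1}^b y_j^ℓ are power sum polynomials. -/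
open MvPolynomial Finset

/-!
Every `Lₙ` is, up to sign, the derivation `D = ∑ᵥ v^{n+1} ∂ᵥ`. On a factor of `∇` it acts by
`D (xᵢ - yⱼ) = xᵢ^{n+1} - yⱼ^{n+1} = (∑_{k+ℓ=n} xᵢᵏ yⱼ^ℓ) (xᵢ - yⱼ)`, so each factor is an
eigenvector of `D` up to a polynomial multiplier, and a derivation adds these multipliers along a
product. Summing `∑_{k+ℓ=n} xᵢᵏ yⱼ^ℓ` over all pairs `(i, j)` gives `∑_{k+ℓ=n} p_k(x) p_ℓ(y)`.
-/

theorem Derivation.map_prod_of_forall_eq_mul {R A ι : Type*} [CommSemiring R] [CommSemiring A]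
    [Algebra R A] (D : Derivation R A A) (s : Finset ι) (g h : ι → A)
    (hg : ∀ i ∈ s, D (g i) = h i * g i) :
    D (∏ i ∈ s, g i) = (∑ i ∈ s, h i) * ∏ i ∈ s, g i := by
  induction s using Finset.cons_induction with
  | empty => simp
  | cons c s hc ih =>
    rw [prod_cons, sum_cons, D.leibniz, smul_eq_mul, smul_eq_mul,
      ih fun i hi => hg i (mem_cons_of_mem hi), hg c (mem_cons_self c s)]
    ring

namespace MvPolynomial

variable {R σ : Type*} [CommSemiring R] [Fintype σ]

/-- For `n = 0` this is the Euler operator `∑ᵥ Xᵥ ∂/∂Xᵥ`, whence the name. -/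
noncomputable def powEulerDerivation (n : ℕ) :
    Derivation R (MvPolynomial σ R) (MvPolynomial σ R) :=
  ∑ v : σ, (X v ^ (n + 1) : MvPolynomial σ R) • pderiv v

theorem powEulerDerivation_apply (n : ℕ) (p : MvPolynomial σ R) :
    powEulerDerivation n p = ∑ v, X v ^ (n + 1) * pderiv v p := by
  rw [powEulerDerivation, ← Derivation.coeFnAddMonoidHom_apply, map_sum, Finset.sum_apply]
  simp only [Derivation.coeFnAddMonoidHom_apply, Derivation.smul_apply, smul_eq_mul]

theorem powEulerDerivation_X [DecidableEq σ] (n : ℕ) (v : σ) :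
    powEulerDerivation n (X v : MvPolynomial σ R) = X v ^ (n + 1) := by
  rw [powEulerDerivation_apply, sum_eq_single v] <;> simp +contextual [pderiv_X, eq_comm]

theorem powEulerDerivation_X_sub_X {R : Type*} [CommRing R] [DecidableEq σ] (n : ℕ) (v w : σ) :
    powEulerDerivation n (X v - X w : MvPolynomial σ R) =
      (∑ c ∈ range (n + 1), X v ^ c * X w ^ (n - c)) * (X v - X w) := by
  rw [map_sub, powEulerDerivation_X, powEulerDerivation_X, ← geom_sum₂_mul]
  simp

end MvPolynomial

/-- For ∇ = ∏ᵢ∏ⱼ (xᵢ - yⱼ) and n ≥ 0, the operator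
Lₙ·Q = -∑ᵥ v^{n+1} ∂Q/∂v (sum over all variables) satisfies
Lₙ·∇ = -(∑_{k+ℓ=n} p_k(x) p_ℓ(y)) ∇, with power sums p_k(x) = ∑ᵢ xᵢᵏ. -/
theorem stmt_5 {R : Type*} [CommRing R] (a b : ℕ) (n : ℕ)
    (nabla : MvPolynomial (Fin a ⊕ Fin b) R)
    (hnabla : nabla = ∏ i : Fin a, ∏ j : Fin b, (X (Sum.inl i) - X (Sum.inr j))) :
    -(∑ v : Fin a ⊕ Fin b, X v ^ (n + 1) * pderiv v nabla) =
      -((∑ c ∈ range (n + 1),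
          (∑ i : Fin a, X (Sum.inl i) ^ c) * (∑ j : Fin b, X (Sum.inr j) ^ (n - c)))
        * nabla) := by
  have hprod : nabla = ∏ p : Fin a × Fin b, (X (Sum.inl p.1) - X (Sum.inr p.2)) := by
    rw [hnabla, Fintype.prod_prod_type]
  have hsum : ∑ c ∈ range (n + 1),
      (∑ i : Fin a, X (Sum.inl i) ^ c) * (∑ j : Fin b, X (Sum.inr j) ^ (n - c)) =
        ∑ p : Fin a × Fin b, ∑ c ∈ range (n + 1),
          (X (Sum.inl p.1) ^ c * X (Sum.inr p.2) ^ (n - c) : MvPolynomial (Fin a ⊕ Fin b) R) := by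
    simp_rw [sum_mul_sum, Fintype.sum_prod_type]
    rw [sum_comm]
    exact sum_congr rfl fun i _ => sum_comm
  rw [← powEulerDerivation_apply, hsum, hprod]
  exact congrArg _ <| Derivation.map_prod_of_forall_eq_mul _ _ _ _
    fun p _ => powEulerDerivation_X_sub_X n _ _
end

section
/- For any α ∈ ℕ and ∇ = ∏_{i,j}(x_i - y_j), the operator L_n satisfies L_n · (∇^α) = -α (∑_{k+ℓ=n} p_k(x) p_ℓ(y)) ∇^α for all n ≥ 0. -/
open MvPolynomial Finset

/-!
`L_n` is a derivation, and a derivation satisfying `D f = g * f` behaves like a logarithmic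
derivative: the multipliers add up over products and get multiplied by `α` on `α`-th powers.
Each factor of `∇` is such an eigenvector, since
`L_n (x - y) = -(x^{n+1} - y^{n+1}) = -(∑_{k+ℓ=n} x^k y^ℓ) (x - y)`;
summing these multipliers over all pairs `(i, j)` gives `-∑_{k+ℓ=n} p_k(x) p_ℓ(y)`.
-/

namespace Derivation

variable {R A : Type*} [CommRing R] [CommRing A] [Algebra R A] (D : Derivation R A A)

theorem apply_mul_of_eq_mul {f h g k : A} (hf : D f = g * f) (hh : D h = k * h) :
    D (f * h) = (g + k) * (f * h) := by
  rw [D.leibniz, hf, hh, smul_eq_mul, smul_eq_mul]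
  ring

theorem apply_prod_of_eq_mul {ι : Type*} (s : Finset ι) {f g : ι → A}
    (hfg : ∀ i ∈ s, D (f i) = g i * f i) :
    D (∏ i ∈ s, f i) = (∑ i ∈ s, g i) * ∏ i ∈ s, f i := by
  classical
  induction s using Finset.induction_on with
  | empty => simp
  | insert i s hi ih =>
    rw [prod_insert hi, sum_insert hi]
    exact D.apply_mul_of_eq_mul (hfg i (mem_insert_self i s))
      (ih fun j hj => hfg j (mem_insert_of_mem hj))

theorem apply_pow_of_eq_mul {f g : A} (hf : D f = g * f) (m : ℕ) :
    D (f ^ m) = m * g * f ^ m := by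
  induction m with
  | zero => simp
  | succ m ih =>
    rw [pow_succ, D.apply_mul_of_eq_mul ih hf]
    push_cast
    ring

end Derivation

namespace MvPolynomial

variable {R σ : Type*} [CommRing R] [Fintype σ]

noncomputable def wittDerivation (n : ℕ) : Derivation R (MvPolynomial σ R) (MvPolynomial σ R) :=
  -∑ v, (X v ^ (n + 1) : MvPolynomial σ R) • pderiv v

theorem wittDerivation_apply (n : ℕ) (Q : MvPolynomial σ R) :
    wittDerivation n Q = -∑ v, X v ^ (n + 1) * pderiv v Q := by
  rw [wittDerivation, Derivation.neg_apply, ← Derivation.coeFnAddMonoidHom_apply, map_sum]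
  simp

theorem wittDerivation_X_sub_X (n : ℕ) (i j : σ) :
    wittDerivation n (X i - X j : MvPolynomial σ R) =
      -(∑ c ∈ range (n + 1), X i ^ c * X j ^ (n - c)) * (X i - X j) := by
  have geom : (X i ^ (n + 1) - X j ^ (n + 1) : MvPolynomial σ R) =
      (∑ c ∈ range (n + 1), X i ^ c * X j ^ (n - c)) * (X i - X j) := by
    simpa using (geom_sum₂_mul (X i : MvPolynomial σ R) (X j) (n + 1)).symm
  classical
  simp only [wittDerivation_apply, map_sub, pderiv_X, Pi.single_apply, mul_sub, mul_ite, mul_one,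
    mul_zero, sum_ite_eq, mem_univ, if_true]
  linear_combination -geom

theorem wittDerivation_prod_X_sub_X {ι κ : Type*} [Fintype ι] [Fintype κ] (n : ℕ) :
    wittDerivation n (∏ i : ι, ∏ j : κ, (X (Sum.inl i) - X (Sum.inr j)) :
        MvPolynomial (ι ⊕ κ) R) =
      -(∑ c ∈ range (n + 1), (∑ i, X (Sum.inl i) ^ c) * (∑ j, X (Sum.inr j) ^ (n - c))) *
        ∏ i : ι, ∏ j : κ, (X (Sum.inl i) - X (Sum.inr j)) := by
  rw [(wittDerivation n).apply_prod_of_eq_mul univ fun i _ =>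
    (wittDerivation n).apply_prod_of_eq_mul univ fun j _ => wittDerivation_X_sub_X n _ _]
  simp only [← sum_neg_distrib, sum_mul_sum, sum_comm (γ := ℕ)]

end MvPolynomial

/-- For any α ∈ ℕ and ∇ = ∏ᵢ∏ⱼ (xᵢ - yⱼ), the operator Lₙ satisfies
Lₙ·(∇^α) = -α (∑_{k+ℓ=n} p_k(x) p_ℓ(y)) ∇^α for all n ≥ 0. -/
theorem stmt_6 {R : Type*} [CommRing R] (a b : ℕ) (n : ℕ) (α : ℕ)
    (nabla : MvPolynomial (Fin a ⊕ Fin b) R)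
    (hnabla : nabla = ∏ i : Fin a, ∏ j : Fin b, (X (Sum.inl i) - X (Sum.inr j))) :
    -(∑ v : Fin a ⊕ Fin b, X v ^ (n + 1) * pderiv v (nabla ^ α)) =
      -((α : MvPolynomial (Fin a ⊕ Fin b) R) *
        (∑ c ∈ range (n + 1),
          (∑ i : Fin a, X (Sum.inl i) ^ c) * (∑ j : Fin b, X (Sum.inr j) ^ (n - c)))
        * nabla ^ α) := by
  rw [← wittDerivation_apply, (wittDerivation n).apply_pow_of_eq_mul
    (hnabla ▸ wittDerivation_prod_X_sub_X n), mul_neg, neg_mul]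
end

section
/- For any two distinct indices i ≠ j in {1,...,k}, the family τ_n = h_n(x_i, x_j) = ∑_{a+b=n} x_i^a x_j^b (for n ≥ 0, and τ_{-1} = 0) in k[x_1,...,x_k] is W_{-1}^∞-flat with respect to the action L_n · Q = -∑_ℓ x_ℓ^{n+1} ∂Q/∂x_ℓ, that is, L_n · τ_m - L_m · τ_n = (n-m) τ_{n+m} for all n, m ≥ -1. -/
/-!
Write `h_T = ∑_{a < T} x^a y^(T-1-a)`, so that `h_T (x - y) = x^T - y^T`, and let `D_N` be the
derivation `∑ₗ xₗ^N ∂ₗ`, so that `L_n = -D_{n+1}`. Applying `D_N` to `h_T (x - y) = x^T - y^T`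
gives `D_N(h_T) (x - y) = T (x^(T+N-1) - y^(T+N-1)) - (x^N - y^N) h_T`. In
`D_M(h_N) - D_N(h_M)` the correction terms cancel because `(x^M - y^M) h_N = h_M (x - y) h_N`,
leaving `(N - M) (x^(N+M-1) - y^(N+M-1)) = (N - M) h_(N+M-1) (x - y)`. Finally `x_i - x_j` is a
non-zero-divisor, since the substitution `x_i ↦ x_i + x_j` is invertible and sends it to `x_i`.
-/

open MvPolynomial Finset

section GeomSum

variable {R A : Type*} [CommRing R] [CommRing A] [Algebra R A]

/-- `geomSum₂ x y T` is `h_{T-1}(x, y)`; the shift makes `geomSum₂ x y 0 = 0` play `h_{-1}`. -/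
def geomSum₂ (x y : A) (T : ℕ) : A :=
  ∑ a ∈ range T, x ^ a * y ^ (T - 1 - a)

theorem geomSum₂_mul_sub (x y : A) (T : ℕ) : geomSum₂ x y T * (x - y) = x ^ T - y ^ T :=
  geom_sum₂_mul x y T

theorem Derivation.apply_geomSum₂_mul_sub {N : ℕ} {x y : A} (D : Derivation R A A)
    (hx : D x = x ^ N) (hy : D y = y ^ N) (T : ℕ) :
    D (geomSum₂ x y T) * (x - y)
      = T • (x ^ (T + N - 1) - y ^ (T + N - 1)) - (x ^ N - y ^ N) * geomSum₂ x y T := by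
  have hD := congrArg D (geomSum₂_mul_sub x y T)
  rw [Derivation.leibniz, map_sub, map_sub, hx, hy, Derivation.leibniz_pow,
    Derivation.leibniz_pow, hx, hy, smul_eq_mul, smul_eq_mul] at hD
  cases T with
  | zero => simp [geomSum₂]
  | succ T =>
    simp only [Nat.add_sub_cancel, Nat.add_right_comm T 1 N, smul_eq_mul, ← pow_add] at hD ⊢
    rw [smul_sub, ← hD]
    ring

theorem Derivation.flat_geomSum₂ {x y : A} (hxy : IsRightRegular (x - y))
    (D : ℕ → Derivation R A A) (hx : ∀ N, D N x = x ^ N) (hy : ∀ N, D N y = y ^ N) (N M : ℕ) :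
    D M (geomSum₂ x y N) - D N (geomSum₂ x y M) = ((N : ℤ) - M) • geomSum₂ x y (N + M - 1) := by
  apply hxy
  change _ * (x - y) = _ * (x - y)
  have hcancel : (x ^ M - y ^ M) * geomSum₂ x y N = (x ^ N - y ^ N) * geomSum₂ x y M := by
    rw [← geomSum₂_mul_sub x y N, ← geomSum₂_mul_sub x y M]
    ring
  rw [sub_mul, (D M).apply_geomSum₂_mul_sub (hx M) (hy M),
    (D N).apply_geomSum₂_mul_sub (hx N) (hy N), smul_mul_assoc, geomSum₂_mul_sub, hcancel,
    Nat.add_comm M N, sub_smul, natCast_zsmul, natCast_zsmul]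
  abel

end GeomSum

namespace MvPolynomial

variable {σ R : Type*} [CommRing R]

theorem isRightRegular_X_sub_X {i j : σ} (hij : i ≠ j) :
    IsRightRegular (X i - X j : MvPolynomial σ R) := by
  classical
  set shift := aeval (R := R) (Function.update (X : σ → MvPolynomial σ R) i (X i + X j))
  set unshift := aeval (R := R) (Function.update (X : σ → MvPolynomial σ R) i (X i - X j))
  have hcomp : unshift.comp shift = AlgHom.id R _ := by
    refine algHom_ext fun l => ?_
    by_cases hl : l = i
    · subst hl
      simp [shift, unshift, hij.symm]
    · simp [shift, unshift, hl]
  have hinv : Function.LeftInverse unshift shift := fun p => DFunLike.congr_fun hcomp p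
  have hshift : shift (X i - X j) = X i := by
    simp [shift, hij.symm]
  intro p q (hpq : p * (X i - X j) = q * (X i - X j))
  have h := congrArg shift hpq
  rw [map_mul, map_mul, hshift] at h
  exact hinv.injective (isRegular_X.right h)

variable [Fintype σ]

noncomputable def xPowDerivation (N : ℕ) : Derivation R (MvPolynomial σ R) (MvPolynomial σ R) :=
  ∑ l : σ, (X l ^ N : MvPolynomial σ R) • pderiv l

theorem xPowDerivation_apply (N : ℕ) (Q : MvPolynomial σ R) :
    xPowDerivation N Q = ∑ l, X l ^ N * pderiv l Q := by
  rw [xPowDerivation, ← Derivation.coeFnAddMonoidHom_apply, map_sum, Finset.sum_apply]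
  simp only [Derivation.coeFnAddMonoidHom_apply, Derivation.smul_apply, smul_eq_mul]

theorem xPowDerivation_X (N : ℕ) (i : σ) : xPowDerivation N (X i : MvPolynomial σ R) = X i ^ N := by
  rw [xPowDerivation_apply, Finset.sum_eq_single i, pderiv_X_self, mul_one]
  · intro l _ hl
    rw [pderiv_X_of_ne (Ne.symm hl), mul_zero]
  · simp

end MvPolynomial

/-- For distinct indices i ≠ j, the family τₙ = hₙ(xᵢ, xⱼ) = ∑_{a+b=n} xᵢᵃ xⱼᵇ
(with τ₋₁ = 0) is 𝔚₋₁^∞-flat with respect to Lₙ·Q = -∑ₗ xₗ^{n+1} ∂Q/∂xₗ. -/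
theorem stmt_9 {R : Type*} [CommRing R] {k : ℕ} (i j : Fin k) (hij : i ≠ j)
    (L : ℤ → MvPolynomial (Fin k) R → MvPolynomial (Fin k) R)
    (hL : ∀ (n : ℤ) (Q : MvPolynomial (Fin k) R),
      L n Q = -∑ l : Fin k, X l ^ (n + 1).toNat * pderiv l Q)
    (τ : ℤ → MvPolynomial (Fin k) R)
    (hτ : ∀ n : ℤ, τ n =
      if 0 ≤ n then ∑ a ∈ range (n.toNat + 1), X i ^ a * X j ^ (n.toNat - a) else 0)
    (n m : ℤ) (hn : -1 ≤ n) (hm : -1 ≤ m) :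
    L n (τ m) - L m (τ n) = (n - m) • τ (n + m) := by
  have hL' : ∀ p Q, L p Q = -xPowDerivation (p + 1).toNat Q := fun p Q => by
    rw [hL, xPowDerivation_apply]
  have hτ' : ∀ p, -1 ≤ p → τ p = geomSum₂ (X i) (X j) (p + 1).toNat := fun p hp => by
    rw [hτ, geomSum₂]
    split_ifs with h0
    · rw [show (p + 1).toNat = p.toNat + 1 by omega]
      simp only [Nat.add_sub_cancel]
    · rw [show p + 1 = 0 by omega]
      simp
  have hflat := Derivation.flat_geomSum₂ (isRightRegular_X_sub_X (R := R) hij) xPowDerivation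
    (fun N => xPowDerivation_X N i) (fun N => xPowDerivation_X N j) (n + 1).toNat (m + 1).toNat
  rw [hL', hL', hτ' m hm, hτ' n hn, neg_sub_neg, hflat]
  rcases lt_or_ge (n + m) (-1) with hnm | hnm
  · rw [show n = -1 by omega, show m = -1 by omega]
    simp
  · rw [hτ' _ hnm, show (n + m + 1).toNat = (n + 1).toNat + (m + 1).toNat - 1 by omega]
    congr 1
    omega
end

section
/- In the polynomial ring F_p[x_1,...,x_a] over the field with p elements (p prime), the derivation ∂ = ∑_{k=1}^{a} x_k^2 ∂/∂x_k satisfies ∂^p = 0 as an operator on F_p[x_1,...,x_a]. -/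
open MvPolynomial Finset Nat

/-!
By the general Leibniz rule, in characteristic `p` all intermediate binomial coefficients of
`∂ᵖ (f * g)` vanish, so `∂ᵖ` is again a derivation and hence is determined by its values on the
variables. From `∂ x = x ^ 2` one gets `∂ⁿ x = n! • x ^ (n + 1)`, so `∂ᵖ xₖ = p! • xₖ ^ (p + 1) = 0`.
-/

namespace Derivation

variable {R A : Type*} [CommSemiring R] [CommSemiring A] [Algebra R A]

theorem sum_apply {M ι : Type*} [AddCommMonoid M] [Module A M] [Module R M] (s : Finset ι)
    (D : ι → Derivation R A M) (a : A) : (∑ i ∈ s, D i) a = ∑ i ∈ s, D i a := by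
  rw [← coeFnAddMonoidHom_apply, map_sum, Finset.sum_apply]
  rfl

theorem iterate_leibniz (D : Derivation R A A) (n : ℕ) (a b : A) :
    D^[n] (a * b) = ∑ ij ∈ antidiagonal n, n.choose ij.1 • (D^[ij.1] a * D^[ij.2] b) := by
  induction n with
  | zero => simp
  | succ n ih =>
    rw [sum_antidiagonal_choose_succ_nsmul (fun i j => D^[i] a * D^[j] b) n]
    simp only [Function.iterate_succ_apply', ih, map_sum, map_nsmul, leibniz, smul_eq_mul,
      nsmul_add, sum_add_distrib]
    congr 1
    refine sum_congr rfl fun ⟨i, j⟩ hij => ?_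
    rw [n.choose_symm_of_eq_add (mem_antidiagonal.1 hij).symm]
    ring

theorem iterate_char_leibniz (D : Derivation R A A) (p : ℕ) [hp : Fact p.Prime] [CharP A p]
    (a b : A) : D^[p] (a * b) = a • D^[p] b + b • D^[p] a := by
  rw [iterate_leibniz, sum_eq_add (0, p) (p, 0) (by simp [hp.out.ne_zero.symm])]
  · simp [mul_comm]
  · rintro ⟨i, j⟩ hij ⟨hi0, hj0⟩
    rw [HasAntidiagonal.mem_antidiagonal] at hij
    have hi : i ≠ 0 := by rintro rfl; exact hi0 (by simp [← hij])
    have hj : j ≠ 0 := by rintro rfl; exact hj0 (by simp [← hij])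
    have hdvd : p ∣ p.choose i := hp.out.dvd_choose_self hi (by omega)
    rw [nsmul_eq_mul, (CharP.cast_eq_zero_iff A p _).2 hdvd, zero_mul]
  · simp
  · simp

def iterateChar (D : Derivation R A A) (p : ℕ) [Fact p.Prime] [CharP A p] : Derivation R A A where
  toLinearMap := (D : Module.End R A) ^ p
  map_one_eq_zero' := by
    obtain ⟨q, hq⟩ := Nat.exists_eq_add_one_of_ne_zero (Fact.out : p.Prime).ne_zero
    simp [Module.End.coe_pow, hq, Function.iterate_succ_apply]
  leibniz' := by simpa [Module.End.coe_pow] using D.iterate_char_leibniz p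

@[simp]
theorem coe_iterateChar (D : Derivation R A A) (p : ℕ) [Fact p.Prime] [CharP A p] :
    ⇑(D.iterateChar p) = D^[p] :=
  Module.End.coe_pow _ _

theorem iterate_apply_of_apply_eq_sq (D : Derivation R A A) {x : A} (hx : D x = x ^ 2) (n : ℕ) :
    D^[n] x = n ! • x ^ (n + 1) := by
  induction n with
  | zero => simp
  | succ n ih =>
    rw [Function.iterate_succ_apply', ih, map_nsmul, leibniz_pow, hx, Nat.factorial_succ]
    simp only [nsmul_eq_mul, smul_eq_mul, Nat.add_sub_cancel, Nat.cast_mul]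
    ring

end Derivation

namespace MvPolynomial

theorem iterate_char_eq_zero_of_apply_X_eq_sq {σ R : Type*} [CommSemiring R] (p : ℕ)
    [Fact p.Prime] [CharP R p] (D : Derivation R (MvPolynomial σ R) (MvPolynomial σ R))
    (hD : ∀ k, D (X k) = X k ^ 2) (Q : MvPolynomial σ R) : D^[p] Q = 0 := by
  suffices D.iterateChar p = 0 by simpa using congr($this Q)
  refine derivation_ext fun k => ?_
  have hfact : (p ! : MvPolynomial σ R) = 0 :=
    (CharP.cast_eq_zero_iff _ p _).2 (Nat.dvd_factorial (Fact.out : p.Prime).pos le_rfl)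
  simp [D.iterate_apply_of_apply_eq_sq (hD k), nsmul_eq_mul, hfact]

end MvPolynomial

/-- In 𝔽ₚ[x₁,…,xₐ], the derivation ∂ = ∑ₖ xₖ² ∂/∂xₖ satisfies ∂ᵖ = 0. -/
theorem stmt_11 (p : ℕ) [Fact p.Prime] (a : ℕ)
    (D : MvPolynomial (Fin a) (ZMod p) → MvPolynomial (Fin a) (ZMod p))
    (hD : ∀ Q : MvPolynomial (Fin a) (ZMod p), D Q = ∑ k : Fin a, X k ^ 2 * pderiv k Q)
    (Q : MvPolynomial (Fin a) (ZMod p)) :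
    D^[p] Q = 0 := by
  let δ : Derivation (ZMod p) (MvPolynomial (Fin a) (ZMod p)) _ :=
    ∑ k : Fin a, (X k ^ 2 : MvPolynomial (Fin a) (ZMod p)) • pderiv k
  have hδ : ⇑δ = D := funext fun Q => by simp [δ, hD, Derivation.sum_apply]
  have hδX : ∀ k, δ (X k) = X k ^ 2 := fun k => by
    simp [δ, Derivation.sum_apply, pderiv_X, Pi.single_apply]
  rw [← hδ]
  exact iterate_char_eq_zero_of_apply_X_eq_sq p δ hδX Q
end

section
/- Let A = F_p[x_1,...,x_a] with derivation ∂_A = ∑_k x_k^2 ∂/∂x_k, let t ∈ A be homogeneous linear (a k-linear combination of the x_i), and define the twisted operator ∂_{A^t}(P) = ∂_A(P) + t·P. Then ∂_{A^t}^p = 0 as an operator on A. -/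
/-!
Write `T = ∑ₖ Tₖ` with `Tₖ = Xₖ² ∂ₖ + μₖ Xₖ`. Each `Tₖ` sends `xⁿ` to `(nₖ + μₖ) xⁿ⁺ᵉᵏ`, so the
`Tₖ` commute and `Tₖᵖ xⁿ = ∏_{j < p} (nₖ + j + μₖ) xⁿ⁺ᵖᵉᵏ`, which vanishes because the factors
run through all of `𝔽ₚ`. In characteristic `p`, Frobenius on commuting operators gives
`Tᵖ = ∑ₖ Tₖᵖ = 0`.
-/

open MvPolynomial Finset

theorem Finset.sum_pow_char_of_commute {R ι : Type*} [Semiring R] (p : ℕ) [Fact p.Prime]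
    [CharP R p] (s : Finset ι) (f : ι → R) (h : ∀ i ∈ s, ∀ j ∈ s, Commute (f i) (f j)) :
    (∑ i ∈ s, f i) ^ p = ∑ i ∈ s, f i ^ p := by
  classical
  induction s using Finset.induction_on with
  | empty => simp [zero_pow (Fact.out : p.Prime).ne_zero]
  | @insert i s hi ih =>
    rw [sum_insert hi, sum_insert hi,
      add_pow_char_of_commute p (Commute.sum_right _ _ _ fun j hj =>
        h i (mem_insert_self i s) j (mem_insert_of_mem hj)),
      ih fun x hx y hy => h x (mem_insert_of_mem hx) y (mem_insert_of_mem hy)]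

theorem ZMod.prod_range_add_natCast_eq_zero (p : ℕ) [NeZero p] (c : ZMod p) :
    ∏ j ∈ range p, (c + j) = 0 :=
  prod_eq_zero (mem_range.2 (-c).val_lt) (by rw [ZMod.natCast_zmod_val, add_neg_cancel])

namespace MvPolynomial

variable {σ R : Type*} [CommRing R] (μ : σ → R)

noncomputable def twistedPderiv (k : σ) : Module.End R (MvPolynomial σ R) :=
  LinearMap.mulLeft R (X k ^ 2) ∘ₗ (pderiv k).toLinearMap + μ k • LinearMap.mulLeft R (X k)

theorem twistedPderiv_apply (k : σ) (Q : MvPolynomial σ R) :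
    twistedPderiv μ k Q = X k ^ 2 * pderiv k Q + μ k • (X k * Q) := by
  simp [twistedPderiv]

theorem twistedPderiv_monomial (k : σ) (n : σ →₀ ℕ) (c : R) :
    twistedPderiv μ k (monomial n c) = monomial (n + Finsupp.single k 1) ((n k + μ k) * c) := by
  rw [twistedPderiv_apply, sq, mul_assoc, X_mul_pderiv_monomial, ← mul_smul_comm, ← mul_add,
    ← Nat.cast_smul_eq_nsmul R, ← add_smul, smul_monomial, X, monomial_mul, one_mul,
    add_comm (Finsupp.single k 1), smul_eq_mul]

theorem twistedPderiv_pow_monomial (k : σ) (m : ℕ) (n : σ →₀ ℕ) (c : R) :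
    (twistedPderiv μ k ^ m) (monomial n c) =
      monomial (n + Finsupp.single k m) ((∏ j ∈ range m, (n k + j + μ k)) * c) := by
  induction m with
  | zero => simp
  | succ m ih =>
    rw [pow_succ', Module.End.mul_apply, ih, twistedPderiv_monomial, prod_range_succ, add_assoc,
      ← Finsupp.single_add]
    simp only [Finsupp.add_apply, Finsupp.single_eq_same, Nat.cast_add]
    ring_nf

theorem commute_twistedPderiv (j k : σ) : Commute (twistedPderiv μ j) (twistedPderiv μ k) := by
  classical
  refine linearMap_ext fun n => LinearMap.ext fun c => ?_
  rcases eq_or_ne j k with rfl | hjk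
  · rfl
  simp only [LinearMap.comp_apply, Module.End.mul_apply, twistedPderiv_monomial,
    Finsupp.add_apply, Finsupp.single_apply, hjk, hjk.symm, if_false, add_zero]
  rw [add_right_comm, mul_left_comm]

theorem twistedPderiv_pow_char (p : ℕ) [Fact p.Prime] (μ : σ → ZMod p) (k : σ) :
    twistedPderiv μ k ^ p = 0 := by
  refine linearMap_ext fun n => LinearMap.ext fun c => ?_
  have hprod : ∏ j ∈ range p, ((n k : ZMod p) + j + μ k) = 0 := by
    simpa only [add_right_comm] using ZMod.prod_range_add_natCast_eq_zero p (n k + μ k)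
  simp [twistedPderiv_pow_monomial, hprod]

theorem sum_twistedPderiv_pow_char (p : ℕ) [Fact p.Prime] [Fintype σ] (μ : σ → ZMod p) :
    (∑ k, twistedPderiv μ k) ^ p = 0 := by
  have : CharP (Module.End (ZMod p) (MvPolynomial σ (ZMod p))) p :=
    Module.charP_end ⟨1, by simp⟩
  rw [Finset.sum_pow_char_of_commute p _ _ fun i _ j _ => commute_twistedPderiv μ i j]
  exact sum_eq_zero fun k _ => twistedPderiv_pow_char p μ k

end MvPolynomial

/-- Let A = 𝔽ₚ[x₁,…,xₐ] with derivation ∂_A = ∑ₖ xₖ² ∂/∂xₖ, and let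
t = ∑ᵢ μᵢ xᵢ be homogeneous linear. Then the twisted operator
∂_{Aᵗ}(P) = ∂_A(P) + t·P satisfies ∂_{Aᵗ}ᵖ = 0. -/
theorem stmt_13 (p : ℕ) [Fact p.Prime] (a : ℕ) (μ : Fin a → ZMod p)
    (D T : MvPolynomial (Fin a) (ZMod p) → MvPolynomial (Fin a) (ZMod p))
    (hD : ∀ Q : MvPolynomial (Fin a) (ZMod p), D Q = ∑ k : Fin a, X k ^ 2 * pderiv k Q)
    (hT : ∀ Q : MvPolynomial (Fin a) (ZMod p), T Q = D Q + (∑ i : Fin a, μ i • X i) * Q)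
    (Q : MvPolynomial (Fin a) (ZMod p)) :
    T^[p] Q = 0 := by
  have hT_eq : T = ⇑(∑ k, twistedPderiv μ k) := by
    funext R
    simp only [hT, hD, LinearMap.sum_apply, twistedPderiv_apply, sum_add_distrib, sum_mul,
      smul_mul_assoc]
  rw [hT_eq, ← Module.End.pow_apply, sum_twistedPderiv_pow_char, LinearMap.zero_apply]
end

section
/- Let A be a commutative algebra with derivation ∂, and for t ∈ A write ∂_t(P) = ∂(P) + tP. Then for all t_1, t_2 ∈ A and all k ≥ 0: ∂_{t_1+t_2}^k(1) = ∑_{j=0}^{k} C(k,j) ∂_{t_1}^j(1) · ∂_{t_2}^{k-j}(1). -/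
/-!
The twisted operators satisfy the twisted Leibniz rule
`∂_{t₁+t₂}(x y) = ∂_{t₁}(x) y + x ∂_{t₂}(y)`. Iterating an additive map `L` with
`L (x y) = f x * y + x * g y` gives the binomial formula
`Lᵏ (a b) = ∑ C(k,j) fʲ(a) gᵏ⁻ʲ(b)`, exactly as for the general Leibniz rule of a derivation,
and the theorem is the case `a = b = 1`.
-/

open Finset

theorem iterate_map_mul_eq_sum_antidiagonal {A : Type*} [Semiring A] (L : A →+ A)
    (f g : A → A) (hL : ∀ x y, L (x * y) = f x * y + x * g y) (n : ℕ) (a b : A) :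
    L^[n] (a * b) = ∑ ij ∈ antidiagonal n, n.choose ij.1 • (f^[ij.1] a * g^[ij.2] b) := by
  induction n with
  | zero => simp
  | succ n ih =>
    rw [sum_antidiagonal_choose_succ_nsmul (fun i j => f^[i] a * g^[j] b) n]
    simp only [Function.iterate_succ_apply', ih, map_sum, map_nsmul, hL, smul_add,
      sum_add_distrib]
    rw [add_comm]
    congr 1
    refine sum_congr rfl fun ⟨i, j⟩ hij ↦ ?_
    rw [n.choose_symm_of_eq_add (mem_antidiagonal.1 hij).symm]

theorem iterate_map_mul_eq_sum_range {A : Type*} [Semiring A] (L : A →+ A)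
    (f g : A → A) (hL : ∀ x y, L (x * y) = f x * y + x * g y) (n : ℕ) (a b : A) :
    L^[n] (a * b) = ∑ i ∈ range (n + 1), n.choose i • (f^[i] a * g^[n - i] b) := by
  rw [iterate_map_mul_eq_sum_antidiagonal L f g hL]
  exact Nat.sum_antidiagonal_eq_sum_range_succ (fun i j ↦ n.choose i • (f^[i] a * g^[j] b)) n

namespace Derivation

variable {R A : Type*} [CommSemiring R] [CommSemiring A] [Algebra R A]

def twist (D : Derivation R A A) (t : A) : A →+ A :=
  D.toLinearMap.toAddMonoidHom + AddMonoidHom.mulLeft t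

theorem twist_apply (D : Derivation R A A) (t x : A) : D.twist t x = D x + t * x := rfl

theorem twist_add_apply_mul (D : Derivation R A A) (t₁ t₂ x y : A) :
    D.twist (t₁ + t₂) (x * y) = D.twist t₁ x * y + x * D.twist t₂ y := by
  simp only [twist_apply, leibniz, smul_eq_mul]
  ring

end Derivation

/-- For a derivation ∂ on a commutative algebra A and t₁, t₂ ∈ A, writing
∂ₜ(P) = ∂(P) + tP, one has for all k:
∂_{t₁+t₂}ᵏ(1) = ∑_{j=0}^k C(k,j) ∂_{t₁}ʲ(1)·∂_{t₂}^{k-j}(1). -/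
theorem stmt_17 {R A : Type*} [CommRing R] [CommRing A] [Algebra R A]
    (D : Derivation R A A) (t₁ t₂ : A)
    (T₁ T₂ T₁₂ : A → A)
    (hT₁ : ∀ P : A, T₁ P = D P + t₁ * P)
    (hT₂ : ∀ P : A, T₂ P = D P + t₂ * P)
    (hT₁₂ : ∀ P : A, T₁₂ P = D P + (t₁ + t₂) * P)
    (k : ℕ) :
    T₁₂^[k] (1 : A) = ∑ j ∈ Finset.range (k + 1),
      (k.choose j) • (T₁^[j] (1 : A) * T₂^[k - j] (1 : A)) := by
  obtain rfl : T₁ = D.twist t₁ := funext hT₁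
  obtain rfl : T₂ = D.twist t₂ := funext hT₂
  obtain rfl : T₁₂ = D.twist (t₁ + t₂) := funext hT₁₂
  simpa using iterate_map_mul_eq_sum_range _ _ _ (D.twist_add_apply_mul t₁ t₂) k 1 1
end
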